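/- Let f = 1/t + r_1 + f_1 t + f_2 t² + ⋯ be a formal Laurent series over ℂ satisfying the Riccati equation f′(t) = −f(t)² + 2r_1·f(t) + c for some c ∈ ℂ, where f′ denotes the termwise derivative. Set d = c + r_1². If d ≠ 0, then t·f(t) = D_{s,r_1}(t) for any square root s ∈ ℂ of d; if d = 0, then f(t) = 1/t + r_1, i.e. t·f(t) = 1 + r_1 t. -/

import Mathlib

noncomputable section

namespace RigidGenus

variable {R : Type*} [Field R]

/-- Termwise substitution `t ↦ w·t` on Laurent series: the coefficient of `t^k`
is multiplied by `w^k`. -/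
def zscale (w : R) (f : LaurentSeries R) : LaurentSeries R where
  coeff k := w ^ k * f.coeff k
  isPWO_support' := f.isPWO_support'.mono (fun k hk => by
    simp only [Function.mem_support, ne_eq] at hk ⊢
    exact fun h => hk (by rw [h, mul_zero]))

/-- Termwise derivative of a Laurent series: `(∑ f_k t^k)' = ∑ k f_k t^(k-1)`. -/
def lderiv (f : LaurentSeries R) : LaurentSeries R where
  coeff k := ((k + 1 : ℤ) : R) * f.coeff (k + 1)
  isPWO_support' := by
    have himg : ((fun k : ℤ => k - 1) '' (Function.support f.coeff)).IsPWO :=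
      f.isPWO_support'.image_of_monotone (fun a b h => sub_le_sub_right h 1)
    refine himg.mono (fun k hk => ?_)
    simp only [Function.mem_support, ne_eq] at hk
    exact ⟨k + 1, fun h => hk (by rw [h, mul_zero]), by ring⟩

/-- `F_H = H(t)/t`, as a formal Laurent series. -/
def FH (H : PowerSeries R) : LaurentSeries R :=
  HahnSeries.single (-1 : ℤ) (1 : R) * HahnSeries.ofPowerSeries ℤ R H

/-- `S_H(w_0,…,w_n;t) = ∑_i ∏_{j ≠ i} F_H((w_j - w_i) t)`. -/
def SH (H : PowerSeries R) {n : ℕ} (w : Fin (n + 1) → ℤ) : LaurentSeries R :=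
  ∑ i : Fin (n + 1), ∏ j ∈ Finset.univ.erase i, zscale ((w j - w i : ℤ) : R) (FH H)

/-- `H` is `n`-algebraically rigid: for all `1 ≤ m ≤ n` and pairwise distinct
integers `w_0, …, w_m`, the Laurent series `S_H(w_0,…,w_m;t)` is constant. -/
def AlgRigid (H : PowerSeries R) (n : ℕ) : Prop :=
  ∀ m : ℕ, 1 ≤ m → m ≤ n → ∀ w : Fin (m + 1) → ℤ, Function.Injective w →
    ∀ k : ℤ, k ≠ 0 → (SH H w).coeff k = 0

/-- The formal exponential series `exp (a t)`. -/
def expS (a : R) : PowerSeries R := PowerSeries.mk fun n => a ^ n / n.factorial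

/-- The formal sine series `sin (a t)`. -/
def sinS (a : R) : PowerSeries R :=
  PowerSeries.mk fun n => if n % 2 = 1 then (-1 : R) ^ (n / 2) * a ^ n / n.factorial else 0

/-- The formal cosine series `cos (a t)`. -/
def cosS (a : R) : PowerSeries R :=
  PowerSeries.mk fun n => if n % 2 = 0 then (-1 : R) ^ (n / 2) * a ^ n / n.factorial else 0

/-- `H = D_{a,b}`, the generalized Todd series `t(a·coth(at)+b)`: for `a ≠ 0` it is
characterized by `D_{a,b}(t)·(e^{at} - e^{-at}) = t·(a(e^{at}+e^{-at}) + b(e^{at}-e^{-at}))`,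
and `D_{0,b}(t) = 1 + bt`. -/
def IsDab (a b : R) (H : PowerSeries R) : Prop :=
  (a ≠ 0 ∧ H * (expS a - expS (-a)) =
      PowerSeries.X * (PowerSeries.C (R := R) a * (expS a + expS (-a)) +
        PowerSeries.C (R := R) b * (expS a - expS (-a)))) ∨
  (a = 0 ∧ H = 1 + PowerSeries.C (R := R) b * PowerSeries.X)

/-- `H = G_{a,b}`, the series `t(a·cot(at)+b)`: for `a ≠ 0` it is characterized by
`G_{a,b}(t)·sin(at) = t·(a·cos(at) + b·sin(at))`, and `G_{0,b}(t) = 1 + bt`. -/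
def IsGab (a b : R) (H : PowerSeries R) : Prop :=
  (a ≠ 0 ∧ H * sinS a =
      PowerSeries.X * (PowerSeries.C (R := R) a * cosS a + PowerSeries.C (R := R) b * sinS a)) ∨
  (a = 0 ∧ H = 1 + PowerSeries.C (R := R) b * PowerSeries.X)

/-!
Write `t·f = g` with `g` a power series, `g(0) = 1`. Multiplying the Riccati equation by `t²` turns
it into `t g' - g = -g² + 2r₁ t g + c t²`. If `g, h` are two solutions with constant term `1` and
`e = g - h = tⁿ u` with `u(0) ≠ 0`, the coefficient of `tⁿ` in the difference of the two equations
reads `(n + 1) u(0) = 0`; so there is at most one such solution. It remains to check that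
`D_{s,r₁}` solves the equation for `c = s² - r₁²`: for `s ≠ 0` this follows by differentiating its
defining identity, since `(e^{st} ∓ e^{-st})' = s (e^{st} ± e^{-st})`; for `s = 0` it is a direct
computation with `1 + r₁ t`.
-/

open PowerSeries

section LaurentSeries

open HahnSeries

lemma coeff_ofPowerSeries_of_neg (g : R⟦X⟧) {k : ℤ} (hk : k < 0) :
    (ofPowerSeries ℤ R g).coeff k = 0 := by
  rw [ofPowerSeries_apply]
  refine embDomain_of_notMem_range fun ⟨n, hn⟩ => ?_
  have : (n : ℤ) = k := hn
  omega

lemma exists_single_mul_eq_ofPowerSeries (f : LaurentSeries R) (n : ℤ)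
    (hf : ∀ k < -n, f.coeff k = 0) :
    ∃ g : R⟦X⟧, single n 1 * f = ofPowerSeries ℤ R g := by
  refine ⟨mk fun m => f.coeff (m - n), ?_⟩
  ext k
  rw [coeff_single_mul, one_mul]
  rcases lt_or_ge k 0 with hk | hk
  · rw [hf _ (by omega), coeff_ofPowerSeries_of_neg _ hk]
  · lift k to ℕ using hk
    rw [ofPowerSeries_apply_coeff, coeff_mk]

lemma coeff_lderiv (f : LaurentSeries R) (k : ℤ) :
    (lderiv f).coeff k = ((k + 1 : ℤ) : R) * f.coeff (k + 1) :=
  rfl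

lemma single_two_mul_lderiv {f : LaurentSeries R} {g : R⟦X⟧}
    (hfg : single 1 1 * f = ofPowerSeries ℤ R g) :
    single 2 1 * lderiv f = ofPowerSeries ℤ R (X * d⁄dX R g - g) := by
  ext k
  have hf (k : ℤ) : f.coeff (k - 1) = (ofPowerSeries ℤ R g).coeff k := by
    rw [← hfg, coeff_single_mul, one_mul]
  rw [coeff_single_mul, one_mul, coeff_lderiv, show k - 2 + 1 = k - 1 by ring, hf]
  rcases lt_or_ge k 0 with hk | hk
  · rw [coeff_ofPowerSeries_of_neg _ hk, coeff_ofPowerSeries_of_neg _ hk, mul_zero]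
  · lift k to ℕ using hk
    rw [ofPowerSeries_apply_coeff, ofPowerSeries_apply_coeff, map_sub]
    cases k with
    | zero => simp
    | succ m =>
      rw [coeff_succ_X_mul, coeff_derivative]
      push_cast
      ring

end LaurentSeries

lemma coeff_X_mul_derivative (g : R⟦X⟧) (n : ℕ) :
    coeff n (X * d⁄dX R g) = n * coeff n g := by
  cases n with
  | zero => simp
  | succ m =>
    rw [coeff_succ_X_mul, coeff_derivative]
    push_cast
    ring

/-- For `g = t·f`, this is the equation `f' = -f² + b f + c` multiplied by `t²`. -/
def IsRiccati (b c : R) (g : R⟦X⟧) : Prop :=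
  X * d⁄dX R g - g = -g ^ 2 + C b * X * g + C c * X ^ 2

lemma isRiccati_of_lderiv_eq {b c : R} {f : LaurentSeries R} {g : R⟦X⟧}
    (hfg : HahnSeries.single 1 1 * f = HahnSeries.ofPowerSeries ℤ R g)
    (hf : lderiv f = -(f ^ 2) + HahnSeries.C b * f + HahnSeries.C c) :
    IsRiccati b c g := by
  unfold IsRiccati
  apply HahnSeries.ofPowerSeries_injective (Γ := ℤ)
  rw [← single_two_mul_lderiv hfg, hf]
  have h2 : (HahnSeries.single 2 1 : LaurentSeries R) =
      HahnSeries.single 1 1 * HahnSeries.single 1 1 := by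
    rw [HahnSeries.single_mul_single]; norm_num
  simp only [map_add, map_neg, map_mul, map_pow, HahnSeries.ofPowerSeries_C,
    HahnSeries.ofPowerSeries_X, ← hfg, h2]
  ring

theorem IsRiccati.unique [CharZero R] {b c : R} {g h : R⟦X⟧} (hg : IsRiccati b c g)
    (hh : IsRiccati b c h) (hg0 : constantCoeff g = 1) (hh0 : constantCoeff h = 1) :
    g = h := by
  by_contra hne
  have hde : X * d⁄dX R (g - h) = (g - h) - (g - h) * (g + h) + C b * X * (g - h) := by
    unfold IsRiccati at hg hh
    rw [map_sub]
    linear_combination hg - hh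
  generalize he_def : g - h = e at hde
  have he : e ≠ 0 := he_def ▸ sub_ne_zero.2 hne
  set n := e.order.toNat
  set u := e.divXPowOrder
  have heu : e = X ^ n * u := X_pow_order_mul_divXPowOrder.symm
  have hu0 : constantCoeff u ≠ 0 := constantCoeff_divXPowOrder_eq_zero_iff.not.2 he
  have hlead (p : R⟦X⟧) : coeff n (X ^ n * p) = constantCoeff p := by
    simpa using coeff_X_pow_mul p n 0
  have he_n : coeff n e = constantCoeff u := by rw [heu, hlead]
  have he_mul : coeff n (e * (g + h)) = 2 * constantCoeff u := by
    rw [heu, mul_assoc, hlead, map_mul, map_add, hg0, hh0]; ring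
  have hXe_n : coeff n (X * e) = 0 := by
    rw [heu, ← mul_assoc, ← pow_succ', coeff_X_pow_mul', if_neg (by omega)]
  have hcoeff := congrArg (coeff n) hde
  rw [coeff_X_mul_derivative, map_add, map_sub, mul_assoc, coeff_C_mul, he_n, he_mul,
    hXe_n] at hcoeff
  have hn : ((n : R) + 1) * constantCoeff u = 0 := by linear_combination hcoeff
  exact hu0 ((mul_eq_zero.1 hn).resolve_left (Nat.cast_add_one_ne_zero n))

lemma constantCoeff_expS (a : R) : constantCoeff (expS a) = 1 := by
  simp [expS]

lemma coeff_one_expS (a : R) : coeff 1 (expS a) = a := by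
  simp [expS]

section CharZero

variable [CharZero R]

lemma derivative_expS (a : R) : d⁄dX R (expS a) = C a * expS a := by
  ext n
  have hn : (n + 1 : R) ≠ 0 := Nat.cast_add_one_ne_zero n
  have hfact : (n.factorial : R) ≠ 0 := Nat.cast_ne_zero.2 n.factorial_ne_zero
  rw [coeff_derivative, coeff_C_mul, expS, coeff_mk, coeff_mk, Nat.factorial_succ]
  push_cast
  field_simp
  ring

lemma isRiccati_of_mul_expS_sub_expS_neg {s b : R} {D : R⟦X⟧} (hs : s ≠ 0)
    (hD : D * (expS s - expS (-s)) =
      X * (C s * (expS s + expS (-s)) + C b * (expS s - expS (-s)))) :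
    IsRiccati (2 * b) (s ^ 2 - b ^ 2) D ∧ constantCoeff D = 1 := by
  set u := expS s - expS (-s)
  set v := expS s + expS (-s)
  have hu' : d⁄dX R u = C s * v := by
    simp only [u, v, map_sub, derivative_expS, map_neg]; ring
  have hv' : d⁄dX R v = C s * u := by
    simp only [u, v, map_add, derivative_expS, map_neg]; ring
  obtain ⟨w, huw⟩ : X ∣ u := X_dvd_iff.2 (by simp [u, constantCoeff_expS])
  have hw0 : constantCoeff w = 2 * s := by
    have := congrArg (coeff 1) huw
    rw [coeff_succ_X_mul, coeff_zero_eq_constantCoeff] at this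
    rw [← this, map_sub, coeff_one_expS, coeff_one_expS]; ring
  have hw : w ≠ 0 := by
    rintro rfl
    simp [hs] at hw0
  have hu : u ≠ 0 := huw ▸ mul_ne_zero X_ne_zero hw
  have hu0 : constantCoeff u = 0 := by rw [huw, map_mul, constantCoeff_X, zero_mul]
  have hv0 : constantCoeff v = 2 := by simp only [v, map_add, constantCoeff_expS]; norm_num
  have hDw : D * w = C s * v + C b * u :=
    mul_left_cancel₀ X_ne_zero (by rw [← hD, huw]; ring)
  have hD' := congrArg (d⁄dX R) hD
  simp only [Derivation.leibniz, smul_eq_mul, map_add, derivative_C, derivative_X, hu', hv'] at hD'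
  refine ⟨?_, ?_⟩
  · -- `u²` times the defect of the Riccati equation is a combination of `hD` and its derivative
    have hmain : (X * d⁄dX R D - D - (-D ^ 2 + C (2 * b) * X * D + C (s ^ 2 - b ^ 2) * X ^ 2))
        * u ^ 2 = 0 := by
      simp only [map_mul, map_sub, map_pow, map_ofNat]
      linear_combination (X * u) * hD'
        + (D * u + X * (C s * v + C b * u) - u - X * C s * v - 2 * C b * X * u) * hD
    exact sub_eq_zero.1 ((mul_eq_zero.1 hmain).resolve_right (pow_ne_zero 2 hu))
  · have h := congrArg constantCoeff hDw
    rw [map_mul, hw0, map_add, map_mul, map_mul, constantCoeff_C, constantCoeff_C, hu0, hv0] at h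
    have h' : (constantCoeff D - 1) * (2 * s) = 0 := by linear_combination h
    exact sub_eq_zero.1 ((mul_eq_zero.1 h').resolve_right (mul_ne_zero two_ne_zero hs))

theorem IsDab.isRiccati {s b : R} {D : R⟦X⟧} (hD : IsDab s b D) :
    IsRiccati (2 * b) (s ^ 2 - b ^ 2) D ∧ constantCoeff D = 1 := by
  rcases hD with ⟨hs, hD⟩ | ⟨rfl, rfl⟩
  · exact isRiccati_of_mul_expS_sub_expS_neg hs hD
  · refine ⟨?_, by simp⟩
    simp only [IsRiccati, map_add, map_mul, map_sub, map_pow, map_ofNat, derivative_C,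
      derivative_X, Derivation.leibniz, smul_eq_mul, Derivation.map_one_eq_zero, map_zero]
    ring

end CharZero

theorem riccati_solution_general (f : LaurentSeries ℂ) (r₁ c : ℂ)
    (hf₁ : f.coeff (-1) = 1) (hf₂ : ∀ k : ℤ, k < -1 → f.coeff k = 0)
    (hric : lderiv f
      = -(f ^ 2) + (HahnSeries.C (2 * r₁) : LaurentSeries ℂ) * f
        + (HahnSeries.C c : LaurentSeries ℂ)) :
    (c + r₁ ^ 2 ≠ 0 → ∀ s : ℂ, s ^ 2 = c + r₁ ^ 2 → ∀ D : PowerSeries ℂ, IsDab s r₁ D →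
        HahnSeries.single (1 : ℤ) (1 : ℂ) * f = HahnSeries.ofPowerSeries ℤ ℂ D) ∧
    (c + r₁ ^ 2 = 0 →
        HahnSeries.single (1 : ℤ) (1 : ℂ) * f
          = HahnSeries.ofPowerSeries ℤ ℂ (1 + PowerSeries.C (R := ℂ) r₁ * PowerSeries.X)) := by
  obtain ⟨g, hfg⟩ := exists_single_mul_eq_ofPowerSeries f 1 hf₂
  have hg0 : constantCoeff g = 1 := by
    rw [← coeff_zero_eq_constantCoeff, ← HahnSeries.ofPowerSeries_apply_coeff (Γ := ℤ), ← hfg,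
      HahnSeries.coeff_single_mul, one_mul]
    exact hf₁
  have hg := isRiccati_of_lderiv_eq hfg hric
  have hsol {s : ℂ} {D : ℂ⟦X⟧} (hs : s ^ 2 = c + r₁ ^ 2) (hD : IsDab s r₁ D) :
      HahnSeries.single 1 1 * f = HahnSeries.ofPowerSeries ℤ ℂ D := by
    obtain ⟨hDric, hD0⟩ := hD.isRiccati
    rw [show s ^ 2 - r₁ ^ 2 = c by linear_combination hs] at hDric
    rw [hfg, hg.unique hDric hg0 hD0]
  exact ⟨fun _ _ hs _ hD => hsol hs hD,
    fun hd => hsol (s := 0) (by linear_combination -hd) (Or.inr ⟨rfl, rfl⟩)⟩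

/-- let `f = 1/t + r₁ + f₁t + ⋯` be a Laurent series over ℂ with
`f′ = −f² + 2r₁·f + c`, and set `d = c + r₁²`. If `d ≠ 0` then `t·f(t) = D_{s,r₁}(t)`
for any square root `s` of `d`; if `d = 0` then `t·f(t) = 1 + r₁t`. -/
theorem riccati_solution (f : LaurentSeries ℂ) (r₁ c : ℂ)
    (hf₁ : f.coeff (-1) = 1) (hf₂ : ∀ k : ℤ, k < -1 → f.coeff k = 0)
    (hr₁ : f.coeff 0 = r₁)
    (hric : lderiv f
      = -(f ^ 2) + (HahnSeries.C (2 * r₁) : LaurentSeries ℂ) * f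
        + (HahnSeries.C c : LaurentSeries ℂ)) :
    (c + r₁ ^ 2 ≠ 0 → ∀ s : ℂ, s ^ 2 = c + r₁ ^ 2 → ∀ D : PowerSeries ℂ, IsDab s r₁ D →
        HahnSeries.single (1 : ℤ) (1 : ℂ) * f = HahnSeries.ofPowerSeries ℤ ℂ D) ∧
    (c + r₁ ^ 2 = 0 →
        HahnSeries.single (1 : ℤ) (1 : ℂ) * f
          = HahnSeries.ofPowerSeries ℤ ℂ (1 + PowerSeries.C (R := ℂ) r₁ * PowerSeries.X)) :=
  riccati_solution_general f r₁ c hf₁ hf₂ hric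

end RigidGenus
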